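/- Every warning of the robust on-off monitor is a warning of the standard on-off monitor: the standard monitor's stored set M⁰ = { ab (h (f v)) | v ∈ D } is contained in the robust monitor's stored set M, hence for any input v_op, if ab (h (f v_op)) ∉ M then ab (h (f v_op)) ∉ M⁰. -/

import Mathlib

/-!
The unperturbed activation `h (f v)` is the admissible perturbation `δ = 0` of itself, so it lies
between `l v` and `u v`. Hence its on-off abstraction meets every constraint the robust monitor
imposes at `v`, i.e. each word of the standard monitor is also stored by the robust one.
-/

theorem le_and_le_of_forall_abs_le_perturbation {ι κ : Type*} {g : (ι → ℝ) → κ → ℝ}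
    {x : ι → ℝ} {Δ : ℝ} (hΔ : 0 ≤ Δ) {lo hi : κ → ℝ}
    (hg : ∀ δ : ι → ℝ, (∀ i, |δ i| ≤ Δ) → ∀ j, lo j ≤ g (x + δ) j ∧ g (x + δ) j ≤ hi j)
    (j : κ) : lo j ≤ g x j ∧ g x j ≤ hi j := by
  simpa using hg 0 (fun _ => by simpa using hΔ) j

theorem decide_lt_of_le_of_le {α : Type*} [LinearOrder α] {lo a hi c : α}
    (ha : lo ≤ a ∧ a ≤ hi) :
    (c < lo → decide (c < a) = true) ∧ (hi ≤ c → decide (c < a) = false) :=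
  ⟨fun hlo => decide_eq_true (hlo.trans_le ha.1),
    fun hhi => decide_eq_false (not_lt.mpr (ha.2.trans hhi))⟩

theorem robust_onoff_warning_implies_standard_warning_general
    {d0 dp dk : ℕ}
    (f : (Fin d0 → ℝ) → (Fin dp → ℝ))
    (h : (Fin dp → ℝ) → (Fin dk → ℝ))
    (D : Finset (Fin d0 → ℝ))
    (Δ : ℝ) (hΔ : 0 ≤ Δ)
    (l u : (Fin d0 → ℝ) → Fin dk → ℝ)
    (hpe : ∀ v ∈ D, ∀ δ : Fin dp → ℝ, (∀ i, |δ i| ≤ Δ) →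
      ∀ j, l v j ≤ h (f v + δ) j ∧ h (f v + δ) j ≤ u v j)
    (c : Fin dk → ℝ) :
    {w : Fin dk → Bool | ∃ v ∈ D, w = fun j => decide (c j < h (f v) j)} ⊆
      {b : Fin dk → Bool | ∃ v ∈ D, ∀ j,
        (c j < l v j → b j = true) ∧ (u v j ≤ c j → b j = false)} ∧
    (∀ v_op : Fin d0 → ℝ,
      (fun j => decide (c j < h (f v_op) j)) ∉
        {b : Fin dk → Bool | ∃ v ∈ D, ∀ j,
          (c j < l v j → b j = true) ∧ (u v j ≤ c j → b j = false)} →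
      (fun j => decide (c j < h (f v_op) j)) ∉
        {w : Fin dk → Bool | ∃ v ∈ D, w = fun j => decide (c j < h (f v) j)}) := by
  suffices hsub : (_ : Set (Fin dk → Bool)) ⊆ _ from ⟨hsub, fun _ => Set.notMem_subset hsub⟩
  rintro _ ⟨v, hv, rfl⟩
  exact ⟨v, hv, fun j =>
    decide_lt_of_le_of_le (le_and_le_of_forall_abs_le_perturbation hΔ (hpe v hv) j)⟩

/-- Every warning of the robust on-off monitor is a warning of the standard on-off
monitor: the standard stored set is contained in the robust stored set. -/
theorem robust_onoff_warning_implies_standard_warning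
    {d0 dp dk : ℕ}
    (f : (Fin d0 → ℝ) → (Fin dp → ℝ))
    (h : (Fin dp → ℝ) → (Fin dk → ℝ))
    (D : Finset (Fin d0 → ℝ)) (hD : D.Nonempty)
    (Δ : ℝ) (hΔ : 0 ≤ Δ)
    (l u : (Fin d0 → ℝ) → Fin dk → ℝ)
    (hpe : ∀ v ∈ D, ∀ δ : Fin dp → ℝ, (∀ i, |δ i| ≤ Δ) →
      ∀ j, l v j ≤ h (f v + δ) j ∧ h (f v + δ) j ≤ u v j)
    (c : Fin dk → ℝ) :
    {w : Fin dk → Bool | ∃ v ∈ D, w = fun j => decide (c j < h (f v) j)} ⊆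
      {b : Fin dk → Bool | ∃ v ∈ D, ∀ j,
        (c j < l v j → b j = true) ∧ (u v j ≤ c j → b j = false)} ∧
    (∀ v_op : Fin d0 → ℝ,
      (fun j => decide (c j < h (f v_op) j)) ∉
        {b : Fin dk → Bool | ∃ v ∈ D, ∀ j,
          (c j < l v j → b j = true) ∧ (u v j ≤ c j → b j = false)} →
      (fun j => decide (c j < h (f v_op) j)) ∉
        {w : Fin dk → Bool | ∃ v ∈ D, w = fun j => decide (c j < h (f v) j)}) :=
  robust_onoff_warning_implies_standard_warning_general f h D Δ hΔ l u hpe c
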